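/- arXiv:2205.16003 — 2 statements merged into one kernel-verified Lean document; each statement's English description precedes it below -/
import Mathlib

section
/- Let A be a probability distribution on ℝ supported on [−R, R], and let 0 < σ ≤ 1/2. Then the chi-squared divergence of the convolution A ⋆ N(0, σ²) from the standard Gaussian N(0,1) satisfies χ²(A ⋆ N(0,σ²), N(0,1)) ≤ e^{C·R²}/σ for some absolute constant C > 0. -/
/-!
By Cauchy–Schwarz against the probability measure `A`,
`(∫ γ_σ(x - s) dA(s))² ≤ ∫ γ_σ(x - s)² dA(s)`, so after Tonelli the χ² integral is at most the
`A`-average of `∫ γ_σ(x - s)² / γ_1(x) dx`. That inner integral is Gaussian: completing the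
square gives `e^{s²/(2 - σ²)} / (σ √(2 - σ²)) ≤ e^{s²} / σ` for `σ ≤ 1`, and `s² ≤ R²` on the
support of `A`, so `C = 1` works.
-/

open Real MeasureTheory
open scoped ENNReal

/-- Density of the centered Gaussian with standard deviation `s`. -/
noncomputable def gaussPDF (s x : ℝ) : ℝ :=
  (s * Real.sqrt (2 * Real.pi))⁻¹ * Real.exp (-x ^ 2 / (2 * s ^ 2))

theorem sq_lintegral_le_lintegral_sq {β : Type*} [MeasurableSpace β] {ν : Measure β}
    [IsProbabilityMeasure ν] {f : β → ℝ≥0∞} (hf : AEMeasurable f ν) :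
    (∫⁻ s, f s ∂ν) ^ 2 ≤ ∫⁻ s, f s ^ 2 ∂ν := by
  have h := ENNReal.lintegral_mul_le_Lp_mul_Lq ν Real.HolderConjugate.two_two hf
    aemeasurable_const (g := fun _ => 1)
  simp only [Pi.mul_apply, mul_one, ENNReal.one_rpow, lintegral_const, measure_univ] at h
  calc (∫⁻ s, f s ∂ν) ^ 2 ≤ ((∫⁻ s, f s ^ (2 : ℝ) ∂ν) ^ (1 / (2 : ℝ))) ^ (2 : ℝ) := by
        rw [ENNReal.rpow_two]; simpa using pow_le_pow_left' h 2
    _ = ∫⁻ s, f s ^ 2 ∂ν := by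
        rw [← ENNReal.rpow_mul]; norm_num

theorem ofReal_sq_integral_div_le_lintegral {β : Type*} [MeasurableSpace β] {ν : Measure β}
    [IsProbabilityMeasure ν] {f : β → ℝ} (hf : AEMeasurable f ν) (hf0 : ∀ s, 0 ≤ f s)
    {c : ℝ} (hc : 0 < c) :
    ENNReal.ofReal ((∫ s, f s ∂ν) ^ 2 / c) ≤ ∫⁻ s, ENNReal.ofReal (f s ^ 2 / c) ∂ν := by
  have hmean : ENNReal.ofReal (∫ s, f s ∂ν) ≤ ∫⁻ s, ENNReal.ofReal (f s) ∂ν := by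
    simpa only [Real.enorm_of_nonneg (integral_nonneg hf0), Real.enorm_of_nonneg (hf0 _)]
      using enorm_integral_le_lintegral_enorm f
  calc ENNReal.ofReal ((∫ s, f s ∂ν) ^ 2 / c)
      = ENNReal.ofReal (∫ s, f s ∂ν) ^ 2 / ENNReal.ofReal c := by
        rw [ENNReal.ofReal_div_of_pos hc, ENNReal.ofReal_pow (integral_nonneg hf0)]
    _ ≤ (∫⁻ s, ENNReal.ofReal (f s) ^ 2 ∂ν) / ENNReal.ofReal c := by
        gcongr
        exact (pow_le_pow_left' hmean 2).trans
          (sq_lintegral_le_lintegral_sq hf.ennreal_ofReal)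
    _ = ∫⁻ s, ENNReal.ofReal (f s ^ 2 / c) ∂ν := by
        simp_rw [ENNReal.ofReal_div_of_pos hc, ENNReal.ofReal_pow (hf0 _), div_eq_mul_inv]
        exact (lintegral_mul_const' _ _ (by simp [hc])).symm

theorem lintegral_ofReal_sq_integral_div_le {α β : Type*} [MeasurableSpace α]
    [MeasurableSpace β] {μ : Measure α} [SFinite μ] {ν : Measure β} [IsProbabilityMeasure ν]
    {k : α → β → ℝ} (hk : Measurable (Function.uncurry k)) (hk0 : ∀ x s, 0 ≤ k x s)
    {q : α → ℝ} (hq : Measurable q) (hq0 : ∀ x, 0 < q x) :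
    ∫⁻ x, ENNReal.ofReal ((∫ s, k x s ∂ν) ^ 2 / q x) ∂μ
      ≤ ∫⁻ s, ∫⁻ x, ENNReal.ofReal (k x s ^ 2 / q x) ∂μ ∂ν := by
  calc ∫⁻ x, ENNReal.ofReal ((∫ s, k x s ∂ν) ^ 2 / q x) ∂μ
      ≤ ∫⁻ x, ∫⁻ s, ENNReal.ofReal (k x s ^ 2 / q x) ∂ν ∂μ :=
        lintegral_mono fun x =>
          ofReal_sq_integral_div_le_lintegral hk.of_uncurry_left.aemeasurable (hk0 x) (hq0 x)
    _ = ∫⁻ s, ∫⁻ x, ENNReal.ofReal (k x s ^ 2 / q x) ∂μ ∂ν :=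
        lintegral_lintegral_swap
          ((hk.pow_const 2).div (hq.comp measurable_fst)).ennreal_ofReal.aemeasurable

theorem gaussPDF_nonneg {s : ℝ} (hs : 0 ≤ s) (x : ℝ) : 0 ≤ gaussPDF s x := by
  unfold gaussPDF; positivity

theorem gaussPDF_pos {s : ℝ} (hs : 0 < s) (x : ℝ) : 0 < gaussPDF s x := by
  unfold gaussPDF; positivity

theorem continuous_gaussPDF (s : ℝ) : Continuous (gaussPDF s) := by
  unfold gaussPDF; fun_prop

theorem exp_neg_quadratic_eq {a : ℝ} (ha : a ≠ 0) (b c x : ℝ) :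
    exp (-(a * x ^ 2 + b * x + c))
      = exp (b ^ 2 / (4 * a) - c) * exp (-a * (x + b / (2 * a)) ^ 2) := by
  rw [← exp_add]; congr 1; field_simp; ring

theorem integrable_exp_neg_quadratic {a : ℝ} (ha : 0 < a) (b c : ℝ) :
    Integrable fun x => exp (-(a * x ^ 2 + b * x + c)) := by
  simp_rw [exp_neg_quadratic_eq ha.ne']
  exact ((integrable_exp_neg_mul_sq ha).comp_add_right _).const_mul _

theorem integral_exp_neg_quadratic {a : ℝ} (ha : 0 < a) (b c : ℝ) :
    ∫ x, exp (-(a * x ^ 2 + b * x + c)) = √(π / a) * exp (b ^ 2 / (4 * a) - c) := by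
  simp_rw [exp_neg_quadratic_eq ha.ne']
  rw [integral_const_mul, integral_add_right_eq_self (fun x => exp (-a * x ^ 2)),
    integral_gaussian, mul_comm]

theorem gaussPDF_sq_div_gaussPDF_one {σ : ℝ} (hσ : σ ≠ 0) (s x : ℝ) :
    gaussPDF σ (x - s) ^ 2 / gaussPDF 1 x
      = (σ ^ 2 * √(2 * π))⁻¹ *
          exp (-((1 / σ ^ 2 - 1 / 2) * x ^ 2 + (-2 * s / σ ^ 2) * x + s ^ 2 / σ ^ 2)) := by
  have hexp : ((2 : ℕ) : ℝ) * (-(x - s) ^ 2 / (2 * σ ^ 2)) = -((1 / σ ^ 2 - 1 / 2) * x ^ 2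
      + (-2 * s / σ ^ 2) * x + s ^ 2 / σ ^ 2) + -x ^ 2 / (2 * 1 ^ 2) := by
    push_cast; field_simp; ring
  unfold gaussPDF
  rw [div_eq_iff (by positivity), mul_pow, ← exp_nat_mul, hexp, exp_add]
  field_simp

theorem one_div_sq_sub_half_pos {σ : ℝ} (hσ : σ ≠ 0) (hσ2 : σ ^ 2 < 2) :
    0 < 1 / σ ^ 2 - 1 / 2 := by
  simpa using one_div_lt_one_div_of_lt (by positivity) hσ2

theorem integral_gaussPDF_sq_div_gaussPDF_one {σ : ℝ} (hσ : 0 < σ) (hσ2 : σ ^ 2 < 2) (s : ℝ) :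
    ∫ x, gaussPDF σ (x - s) ^ 2 / gaussPDF 1 x
      = exp (s ^ 2 / (2 - σ ^ 2)) / (σ * √(2 - σ ^ 2)) := by
  have ha := one_div_sq_sub_half_pos hσ.ne' hσ2
  simp_rw [gaussPDF_sq_div_gaussPDF_one hσ.ne' s]
  rw [integral_const_mul, integral_exp_neg_quadratic ha]
  have hτ : 0 < 2 - σ ^ 2 := by linarith
  have hquot : π / (1 / σ ^ 2 - 1 / 2) = 2 * π * σ ^ 2 / (2 - σ ^ 2) := by
    field_simp
  have hexp : (-2 * s / σ ^ 2) ^ 2 / (4 * (1 / σ ^ 2 - 1 / 2)) - s ^ 2 / σ ^ 2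
      = s ^ 2 / (2 - σ ^ 2) := by
    field_simp; ring
  rw [hquot, hexp, sqrt_div' _ hτ.le, sqrt_mul (by positivity) (σ ^ 2), sqrt_sq hσ.le]
  field_simp

theorem integrable_gaussPDF_sq_div_gaussPDF_one {σ : ℝ} (hσ : 0 < σ) (hσ2 : σ ^ 2 < 2)
    (s : ℝ) : Integrable fun x => gaussPDF σ (x - s) ^ 2 / gaussPDF 1 x := by
  have ha := one_div_sq_sub_half_pos hσ.ne' hσ2
  simp_rw [gaussPDF_sq_div_gaussPDF_one hσ.ne' s]
  exact (integrable_exp_neg_quadratic ha _ _).const_mul _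

theorem lintegral_gaussPDF_sq_div_gaussPDF_one_le {σ : ℝ} (hσ : 0 < σ) (hσ1 : σ ^ 2 ≤ 1)
    (s : ℝ) :
    ∫⁻ x, ENNReal.ofReal (gaussPDF σ (x - s) ^ 2 / gaussPDF 1 x)
      ≤ ENNReal.ofReal (exp (s ^ 2) / σ) := by
  have hσ2 : σ ^ 2 < 2 := by linarith
  have hτ : 1 ≤ 2 - σ ^ 2 := by linarith
  rw [← ofReal_integral_eq_lintegral_ofReal (integrable_gaussPDF_sq_div_gaussPDF_one hσ hσ2 s)
      (ae_of_all _ fun x => div_nonneg (sq_nonneg _) (gaussPDF_pos one_pos x).le),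
    integral_gaussPDF_sq_div_gaussPDF_one hσ hσ2]
  gcongr
  · exact div_le_self (sq_nonneg s) hτ
  · exact le_mul_of_one_le_right hσ.le (one_le_sqrt.2 hτ)

/-- The chi-squared divergence of `A ⋆ N(0,σ²)` (whose density at `x` is
`∫ γ_{σ²}(x - s) dA(s)`) from `N(0,1)` is at most `e^{C R²}/σ` when `A` is
supported on `[-R, R]` and `0 < σ ≤ 1/2`. -/
theorem chiSq_convolution_bound :
    ∃ C > (0 : ℝ), ∀ (R σ : ℝ) (A : Measure ℝ), IsProbabilityMeasure A →
      A (Set.Icc (-R) R)ᶜ = 0 → 0 < σ → σ ≤ 1 / 2 →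
      (∫ x, (∫ s, gaussPDF σ (x - s) ∂A) ^ 2 / gaussPDF 1 x) - 1
        ≤ Real.exp (C * R ^ 2) / σ := by
  refine ⟨1, one_pos, ?_⟩
  intro R σ A _ hsupp hσ hσ2
  have hσ1 : σ ^ 2 ≤ 1 := by nlinarith
  have hIcc : ∀ᵐ s ∂A, s ∈ Set.Icc (-R) R := ae_iff.2 hsupp
  have hsq : ∀ᵐ s ∂A, s ^ 2 ≤ R ^ 2 := hIcc.mono fun s hs => sq_le_sq' hs.1 hs.2
  have hk : Measurable (Function.uncurry fun x s => gaussPDF σ (x - s)) :=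
    ((continuous_gaussPDF σ).comp continuous_sub).measurable
  have hp : Measurable fun x => ∫ s, gaussPDF σ (x - s) ∂A :=
    hk.stronglyMeasurable.integral_prod_right'.measurable
  have hlint : ∫⁻ x, ENNReal.ofReal ((∫ s, gaussPDF σ (x - s) ∂A) ^ 2 / gaussPDF 1 x)
      ≤ ENNReal.ofReal (exp (R ^ 2) / σ) :=
    calc _ ≤ ∫⁻ s, ∫⁻ x, ENNReal.ofReal (gaussPDF σ (x - s) ^ 2 / gaussPDF 1 x) ∂volume ∂A :=
          lintegral_ofReal_sq_integral_div_le hk (fun _ _ => gaussPDF_nonneg hσ.le _)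
            (continuous_gaussPDF 1).measurable (gaussPDF_pos one_pos)
      _ ≤ ∫⁻ _, ENNReal.ofReal (exp (R ^ 2) / σ) ∂A :=
          lintegral_mono_ae <| hsq.mono fun s hs =>
            (lintegral_gaussPDF_sq_div_gaussPDF_one_le hσ hσ1 s).trans (by gcongr)
      _ = ENNReal.ofReal (exp (R ^ 2) / σ) := by simp
  -- `integral_eq_lintegral_of_nonneg_ae` needs no integrability: both sides are `0` without it.
  rw [one_mul, integral_eq_lintegral_of_nonneg_ae
    (ae_of_all _ fun x => div_nonneg (sq_nonneg _) (gaussPDF_pos one_pos x).le)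
    ((hp.pow_const 2).div (continuous_gaussPDF 1).measurable).aestronglyMeasurable]
  linarith [ENNReal.toReal_le_of_le_ofReal (by positivity) hlint]
end

section
/- For any s, t ∈ ℝ and 0 < σ < 1, ∫_{−∞}^{∞} γ_{σ²}(x−s)·γ_{σ²}(x−t)/γ(x) dx = exp((2st − (s²+t²)(1−σ²))/(2σ²(2−σ²))) / (σ√(2−σ²)), where γ_{σ²}(x) = (1/(σ√(2π))) e^{−x²/(2σ²)} and γ = γ_1. -/
open Real MeasureTheory

theorem gaussian_product_integral (s t σ : ℝ) (h1 : 0 < σ) (h2 : σ < 1) :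
    ∫ x, gaussPDF σ (x - s) * gaussPDF σ (x - t) / gaussPDF 1 x
      = Real.exp ((2 * s * t - (s ^ 2 + t ^ 2) * (1 - σ ^ 2)) / (2 * σ ^ 2 * (2 - σ ^ 2)))
          / (σ * Real.sqrt (2 - σ ^ 2)) := by
  have hσ : σ ≠ 0 := ne_of_gt h1
  have hs2 : (0:ℝ) < 2 - σ ^ 2 := by nlinarith
  have hs2' : (2:ℝ) - σ ^ 2 ≠ 0 := ne_of_gt hs2
  set b : ℝ := (2 - σ ^ 2) / (2 * σ ^ 2) with hb
  have hbpos : 0 < b := by positivity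
  set μ : ℝ := (s + t) / (2 - σ ^ 2) with hμ
  set c : ℝ := (s ^ 2 + t ^ 2 - (s + t) ^ 2 / (2 - σ ^ 2)) / (2 * σ ^ 2) with hc
  set C : ℝ := (σ ^ 2 * Real.sqrt (2 * Real.pi))⁻¹ * Real.exp (-c) with hC
  have hπ : (0:ℝ) < Real.sqrt (2 * Real.pi) := Real.sqrt_pos.mpr (by positivity)
  have key : ∀ x : ℝ, gaussPDF σ (x - s) * gaussPDF σ (x - t) / gaussPDF 1 x
      = C * Real.exp (-b * (x - μ) ^ 2) := by
    intro x
    simp only [gaussPDF, one_mul, one_pow, hC]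
    rw [div_eq_iff (by positivity)]
    have hexp : -c + -b * (x - μ) ^ 2 + -x ^ 2 / (2 * 1)
        = -(x - s) ^ 2 / (2 * σ ^ 2) + -(x - t) ^ 2 / (2 * σ ^ 2) := by
      simp only [hc, hb, hμ]
      field_simp
      ring
    calc (σ * Real.sqrt (2 * π))⁻¹ * Real.exp (-(x - s) ^ 2 / (2 * σ ^ 2))
          * ((σ * Real.sqrt (2 * π))⁻¹ * Real.exp (-(x - t) ^ 2 / (2 * σ ^ 2)))
        = (σ * Real.sqrt (2 * π))⁻¹ * (σ * Real.sqrt (2 * π))⁻¹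
            * Real.exp (-(x - s) ^ 2 / (2 * σ ^ 2) + -(x - t) ^ 2 / (2 * σ ^ 2)) := by
          rw [Real.exp_add]; ring
      _ = (σ * Real.sqrt (2 * π))⁻¹ * (σ * Real.sqrt (2 * π))⁻¹
            * Real.exp (-c + -b * (x - μ) ^ 2 + -x ^ 2 / (2 * 1)) := by rw [hexp]
      _ = (σ ^ 2 * Real.sqrt (2 * π))⁻¹ * Real.exp (-c) * Real.exp (-b * (x - μ) ^ 2)
            * ((Real.sqrt (2 * π))⁻¹ * Real.exp (-x ^ 2 / (2 * 1))) := by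
          rw [Real.exp_add, Real.exp_add]
          have h2π : Real.sqrt (2 * π) ≠ 0 := ne_of_gt hπ
          field_simp
  calc ∫ x, gaussPDF σ (x - s) * gaussPDF σ (x - t) / gaussPDF 1 x
      = ∫ x, C * Real.exp (-b * (x - μ) ^ 2) := by
        exact integral_congr_ae (Filter.Eventually.of_forall key)
    _ = C * ∫ x, Real.exp (-b * (x - μ) ^ 2) := integral_const_mul _ _
    _ = C * ∫ x, Real.exp (-b * x ^ 2) :=
        congrArg _ (integral_sub_right_eq_self (fun x => Real.exp (-b * x ^ 2)) μ)
    _ = C * Real.sqrt (π / b) := by rw [integral_gaussian]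
    _ = Real.exp ((2 * s * t - (s ^ 2 + t ^ 2) * (1 - σ ^ 2)) / (2 * σ ^ 2 * (2 - σ ^ 2)))
          / (σ * Real.sqrt (2 - σ ^ 2)) := by
        have hcE : -c = (2 * s * t - (s ^ 2 + t ^ 2) * (1 - σ ^ 2))
            / (2 * σ ^ 2 * (2 - σ ^ 2)) := by
          simp only [hc]
          field_simp
          ring
        have hsqrt : Real.sqrt (π / b) = σ * Real.sqrt (2 * π) / Real.sqrt (2 - σ ^ 2) := by
          have hpb : π / b = σ ^ 2 * (2 * π) / (2 - σ ^ 2) := by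
            simp only [hb]; field_simp
          rw [hpb, Real.sqrt_div (by positivity) _, Real.sqrt_mul (by positivity),
            Real.sqrt_sq h1.le]
        rw [hC, hcE, hsqrt]
        rw [eq_div_iff (by positivity)]
        field_simp
end
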